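/- arXiv:math/0703579 — 2 statements merged into one kernel-verified Lean document; each statement's English description precedes it below -/
import Mathlib

section
/- Let $K$ be a field, $F^{(1)} = Z_1^n + \sum_{k=0}^{n-2} a_k^{(1)}(X_1,Y_1) Z_1^k$ the strict quadratic transform in direction $(1:0:0)$ of a Weierstrass equation $F = Z^n + \sum_{k=0}^{n-2} a_k(X,Y) Z^k$ (so $a_k^{(1)}(X_1,Y_1) = a_k(X_1, X_1 Y_1)/X_1^{n-k}$). Suppose $s > 1$, $v \in K[[Y_1]]$, and $(X_1 + Y_1^s v(Y_1))^{n-k}$ divides $a_k^{(1)}$ for all $k = 0, \dots, n-2$. Then $X_1^{n-k}$ divides $a_k^{(1)}$ for all $k = 0, \dots, n-2$. -/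
/-- The monomial `X^i Y^j` exponent in `K[[X,Y]] = MvPowerSeries (Fin 2) K`. -/
noncomputable def mon2 (i j : ℕ) : Fin 2 →₀ ℕ :=
  Finsupp.single 0 i + Finsupp.single 1 j

/-- `quadTr a c` is the series `a(X, XY) / X^c`, the strict quadratic transform of `a` in
the direction `(1:0:0)`: its coefficient at `X^i Y^j` is the coefficient of `a` at
`X^{i+c-j} Y^j` (and `0` if `j > i + c`).  When `ord a ≥ c` the division by `X^c` is exact
and this is literally `a(X, XY)/X^c`. -/
noncomputable def quadTr {K : Type*} [Field K] (a : MvPowerSeries (Fin 2) K) (c : ℕ) :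
    MvPowerSeries (Fin 2) K :=
  fun m => if m 1 ≤ m 0 + c then MvPowerSeries.coeff (mon2 (m 0 + c - m 1) (m 1)) a else 0

section Aux

open MvPowerSeries

variable {K : Type*} [Field K]

/-- Lexicographic (first coordinate, then second) comparison on exponents. -/
def Lle (p m : Fin 2 →₀ ℕ) : Prop := p 0 < m 0 ∨ (p 0 = m 0 ∧ p 1 ≤ m 1)

lemma fin2_ext {p q : Fin 2 →₀ ℕ} (h0 : p 0 = q 0) (h1 : p 1 = q 1) : p = q := by
  ext i
  fin_cases i
  · exact h0
  · exact h1

lemma Lle_add {a b c d : Fin 2 →₀ ℕ} (h1 : Lle a b) (h2 : Lle c d) : Lle (a + c) (b + d) := by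
  simp only [Lle, Finsupp.add_apply] at *
  omega

lemma Lle_antisymm_add {p q u w : Fin 2 →₀ ℕ} (hpu : Lle p u) (hqw : Lle q w)
    (h : u + w = p + q) : u = p ∧ w = q := by
  have h0 : u 0 + w 0 = p 0 + q 0 := by
    rw [← Finsupp.add_apply, ← Finsupp.add_apply, h]
  have h1 : u 1 + w 1 = p 1 + q 1 := by
    rw [← Finsupp.add_apply, ← Finsupp.add_apply, h]
  simp only [Lle] at hpu hqw
  constructor <;> apply fin2_ext <;> omega

/-- `p` is the lexicographically smallest exponent in the support of `f`. -/
def IsLMin (f : MvPowerSeries (Fin 2) K) (p : Fin 2 →₀ ℕ) : Prop :=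
  MvPowerSeries.coeff p f ≠ 0 ∧ ∀ m, MvPowerSeries.coeff m f ≠ 0 → Lle p m

set_option maxHeartbeats 1000000 in
lemma IsLMin.mul {f g : MvPowerSeries (Fin 2) K} {p q : Fin 2 →₀ ℕ}
    (hf : IsLMin f p) (hg : IsLMin g q) : IsLMin (f * g) (p + q) := by
  classical
  constructor
  · have key : MvPowerSeries.coeff (p + q) (f * g) =
        MvPowerSeries.coeff p f * MvPowerSeries.coeff q g := by
      rw [MvPowerSeries.coeff_mul]
      refine Finset.sum_eq_single_of_mem (p, q) (Finset.HasAntidiagonal.mem_antidiagonal.mpr rfl) ?_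
      rintro ⟨u, w⟩ hmem hne
      by_contra hz
      have hu : MvPowerSeries.coeff u f ≠ 0 := left_ne_zero_of_mul hz
      have hw : MvPowerSeries.coeff w g ≠ 0 := right_ne_zero_of_mul hz
      obtain ⟨e1, e2⟩ := Lle_antisymm_add (hf.2 u hu) (hg.2 w hw)
        (Finset.HasAntidiagonal.mem_antidiagonal.mp hmem)
      cases e1; cases e2; exact hne rfl
    rw [key]
    exact mul_ne_zero hf.1 hg.1
  · intro m hm
    rw [MvPowerSeries.coeff_mul] at hm
    obtain ⟨⟨u, w⟩, hmem, hz⟩ := Finset.exists_ne_zero_of_sum_ne_zero hm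
    have hsum : u + w = m := Finset.HasAntidiagonal.mem_antidiagonal.mp hmem
    have := Lle_add (hf.2 u (left_ne_zero_of_mul hz)) (hg.2 w (right_ne_zero_of_mul hz))
    rwa [hsum] at this

lemma isLMin_one : IsLMin (1 : MvPowerSeries (Fin 2) K) 0 := by
  classical
  constructor
  · rw [MvPowerSeries.coeff_one]
    simp
  · intro m _
    simp only [Lle, Finsupp.coe_zero, Pi.zero_apply]
    omega

lemma IsLMin.pow {f : MvPowerSeries (Fin 2) K} {p : Fin 2 →₀ ℕ}
    (hf : IsLMin f p) (c : ℕ) : IsLMin (f ^ c) (c • p) := by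
  induction c with
  | zero => simpa using (isLMin_one : IsLMin (1 : MvPowerSeries (Fin 2) K) 0)
  | succ n ih =>
    rw [pow_succ, succ_nsmul]
    exact ih.mul hf

lemma mon2_apply0 (i j : ℕ) : mon2 i j 0 = i := by
  simp [mon2, Finsupp.single_apply]

lemma mon2_apply1 (i j : ℕ) : mon2 i j 1 = j := by
  simp [mon2, Finsupp.single_apply]

lemma mon2_self (m : Fin 2 →₀ ℕ) : mon2 (m 0) (m 1) = m :=
  fin2_ext (mon2_apply0 _ _) (mon2_apply1 _ _)

lemma exists_isLMin {f : MvPowerSeries (Fin 2) K} (hf : f ≠ 0) :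
    ∃ p, IsLMin f p := by
  classical
  have hne : ∃ m : Fin 2 →₀ ℕ, MvPowerSeries.coeff m f ≠ 0 := by
    by_contra h
    push_neg at h
    exact hf (MvPowerSeries.ext fun m => by simpa using h m)
  have h0 : ∃ i, ∃ m : Fin 2 →₀ ℕ, MvPowerSeries.coeff m f ≠ 0 ∧ m 0 = i :=
    ⟨hne.choose 0, hne.choose, hne.choose_spec, rfl⟩
  obtain ⟨m1, hm1, hm10⟩ := Nat.find_spec h0
  have h1 : ∃ j, MvPowerSeries.coeff (mon2 (Nat.find h0) j) f ≠ 0 := by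
    refine ⟨m1 1, ?_⟩
    rw [← hm10, mon2_self]
    exact hm1
  refine ⟨mon2 (Nat.find h0) (Nat.find h1), Nat.find_spec h1, ?_⟩
  intro m hm
  have hi : Nat.find h0 ≤ m 0 := Nat.find_min' h0 ⟨m, hm, rfl⟩
  unfold Lle
  rw [mon2_apply0, mon2_apply1]
  rcases eq_or_lt_of_le hi with heq | hlt
  · right
    refine ⟨heq, Nat.find_min' h1 ?_⟩
    rw [heq, mon2_self]
    exact hm
  · left
    exact hlt

lemma coeff_quadTr (a : MvPowerSeries (Fin 2) K) (c : ℕ) (m : Fin 2 →₀ ℕ) :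
    MvPowerSeries.coeff m (quadTr a c) =
      if m 1 ≤ m 0 + c then MvPowerSeries.coeff (mon2 (m 0 + c - m 1) (m 1)) a else 0 :=
  rfl

end Aux

/-- Let `F = Z^n + ∑_{k≤n-2} a_k(X,Y) Z^k` be a Weierstrass equation of multiplicity `n`
(`ord (a_k) ≥ n-k`), and `F¹ = Z₁^n + ∑ a_k¹ Z₁^k` its quadratic transform in direction
`(1:0:0)`, so `a_k¹(X₁,Y₁) = a_k(X₁, X₁Y₁)/X₁^{n-k}`.  If `s > 1`, `v ∈ K[[Y₁]]`, and
`(X₁ + Y₁^s v(Y₁))^{n-k}` divides `a_k¹` for all `k ≤ n-2`, then `X₁^{n-k}` divides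
`a_k¹` for all `k ≤ n-2`. -/
theorem tangent_permitted_implies_exceptional {K : Type*} [Field K] (n : ℕ)
    (a : ℕ → MvPowerSeries (Fin 2) K)
    (hord : ∀ k, k ≤ n - 2 → ∀ m : Fin 2 →₀ ℕ,
      MvPowerSeries.coeff m (a k) ≠ 0 → n - k ≤ m 0 + m 1)
    (s : ℕ) (hs : 1 < s) (v : MvPowerSeries (Fin 2) K)
    (hv : ∀ m : Fin 2 →₀ ℕ, MvPowerSeries.coeff m v ≠ 0 → m 0 = 0)
    (hdiv : ∀ k, k ≤ n - 2 →
      (MvPowerSeries.X 0 + (MvPowerSeries.X 1 : MvPowerSeries (Fin 2) K) ^ s * v) ^ (n - k)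
        ∣ quadTr (a k) (n - k)) :
    ∀ k, k ≤ n - 2 →
      (MvPowerSeries.X 0 : MvPowerSeries (Fin 2) K) ^ (n - k) ∣ quadTr (a k) (n - k) := by
  classical
  intro k hk
  set c := n - k with hc
  obtain ⟨q, hq⟩ := hdiv k hk
  by_cases hb : quadTr (a k) c = 0
  · rw [hb]
    exact dvd_zero _
  by_cases hh : (MvPowerSeries.X 1 : MvPowerSeries (Fin 2) K) ^ s * v = 0
  · rw [hh, add_zero] at hq
    exact ⟨q, hq⟩
  -- main case
  have hsupph : ∀ m : Fin 2 →₀ ℕ,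
      MvPowerSeries.coeff m ((MvPowerSeries.X 1 : MvPowerSeries (Fin 2) K) ^ s * v) ≠ 0 →
      m 0 = 0 ∧ s ≤ m 1 := by
    intro m hm
    rw [MvPowerSeries.coeff_mul] at hm
    obtain ⟨⟨u, w⟩, hmem, hz⟩ := Finset.exists_ne_zero_of_sum_ne_zero hm
    have hu : MvPowerSeries.coeff u ((MvPowerSeries.X 1 : MvPowerSeries (Fin 2) K) ^ s) ≠ 0 :=
      left_ne_zero_of_mul hz
    have hw : MvPowerSeries.coeff w v ≠ 0 := right_ne_zero_of_mul hz
    rw [MvPowerSeries.coeff_X_pow] at hu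
    have hu' : u = Finsupp.single 1 s := by
      by_contra h'
      simp [h'] at hu
    have hw0 : w 0 = 0 := hv w hw
    have hsum : u + w = m := Finset.HasAntidiagonal.mem_antidiagonal.mp hmem
    subst hu'
    constructor
    · have : m 0 = Finsupp.single (1 : Fin 2) s 0 + w 0 := by
        rw [← hsum, Finsupp.add_apply]
      simp [Finsupp.single_apply, hw0] at this
      omega
    · have : m 1 = Finsupp.single (1 : Fin 2) s 1 + w 1 := by
        rw [← hsum, Finsupp.add_apply]
      simp [Finsupp.single_apply] at this
      omega
  obtain ⟨ph, hph⟩ := exists_isLMin hh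
  have hph0 : ph 0 = 0 := (hsupph ph hph.1).1
  have hph1 : s ≤ ph 1 := (hsupph ph hph.1).2
  have hg : IsLMin (MvPowerSeries.X 0 +
      (MvPowerSeries.X 1 : MvPowerSeries (Fin 2) K) ^ s * v) ph := by
    have hXne : ph ≠ Finsupp.single (0 : Fin 2) 1 := by
      intro heq
      have : ph 0 = 1 := by rw [heq]; simp
      omega
    constructor
    · rw [map_add, MvPowerSeries.coeff_X, if_neg hXne, zero_add]
      exact hph.1
    · intro m hm
      rw [map_add, MvPowerSeries.coeff_X] at hm
      by_cases hx : m = Finsupp.single (0 : Fin 2) 1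
      · left
        rw [hx]
        simp [hph0]
      · rw [if_neg hx, zero_add] at hm
        exact hph.2 m hm
  have hqne : q ≠ 0 := by
    rintro rfl
    rw [mul_zero] at hq
    exact hb hq
  obtain ⟨pq, hpq⟩ := exists_isLMin hqne
  have hbmin : IsLMin (quadTr (a k) c) (c • ph + pq) := by
    rw [hq]
    exact (hg.pow c).mul hpq
  have e0 : (c • ph + pq) 0 = pq 0 := by
    simp [Finsupp.add_apply, Finsupp.smul_apply, hph0]
  have e1 : (c • ph + pq) 1 = c * ph 1 + pq 1 := by
    simp [Finsupp.add_apply, Finsupp.smul_apply, mul_comm]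
  have hguard : (c • ph + pq) 1 ≤ (c • ph + pq) 0 + c := by
    by_contra hgt
    apply hbmin.1
    rw [coeff_quadTr, if_neg hgt]
  have hcle : c ≤ pq 0 := by
    rw [e0] at hguard
    rw [e1] at hguard
    have h2c : 2 * c ≤ c * ph 1 := by
      have : 2 ≤ ph 1 := le_trans hs hph1
      calc 2 * c = c * 2 := by ring
        _ ≤ c * ph 1 := Nat.mul_le_mul_left c this
    omega
  rw [MvPowerSeries.X_pow_dvd_iff]
  intro m hm
  by_contra hne
  have hl := hbmin.2 m hne
  unfold Lle at hl
  rw [e0] at hl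
  omega
end

section
/- Let $K$ be a field and $G(Y_1) = \sum_{i \geq \lambda} \alpha_i Y_1^i \in K[[Y_1]]$ with $\lambda > 1$ and $\alpha_\lambda \neq 0$. Then there exist a power series $H(X,Y) \in K[[X,Y]]$ of order $\lambda$ which is regular in $Y$ of order $\lambda$ (i.e. $\mathrm{ord}(H(0,Y)) = \lambda$), and a unit $u(X_1,Y_1) \in K[[X_1,Y_1]]$, such that $H(X_1, X_1 Y_1) = X_1^\lambda \cdot u(X_1,Y_1) \cdot (X_1 + G(Y_1))$. -/
noncomputable def Ucoef {K : Type*} [Field K] (c : K) (a : ℕ → K) (lam : ℕ) : ℕ → ℕ → K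
  | k, m =>
    if m ≤ k then (if k = 0 then 1 else 0)
    else -c * ((if hk : k = 0 then 0 else Ucoef c a lam (k - 1) (m + lam))
      + ∑ i ∈ (Finset.range m).attach, a (m + lam - i.1) * Ucoef c a lam k i.1)
  termination_by k m => (k, m)
  decreasing_by
  · exact Prod.Lex.left _ _ (Nat.sub_lt (Nat.pos_of_ne_zero hk) one_pos)
  · exact Prod.Lex.right _ (Finset.mem_range.mp i.2)

lemma Ucoef_of_le {K : Type*} [Field K] {c : K} {a : ℕ → K} {lam k m : ℕ} (h : m ≤ k) :
    Ucoef c a lam k m = if k = 0 then 1 else 0 := by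
  rw [Ucoef.eq_def]; exact if_pos h

lemma Ucoef_of_lt {K : Type*} [Field K] {c : K} {a : ℕ → K} {lam k m : ℕ} (h : k < m) :
    Ucoef c a lam k m = -c * ((if k = 0 then 0 else Ucoef c a lam (k - 1) (m + lam))
      + ∑ i ∈ Finset.range m, a (m + lam - i) * Ucoef c a lam k i) := by
  rw [Ucoef.eq_def]
  simp only [show ¬ m ≤ k from not_le.mpr h, if_false, dite_eq_ite]
  rw [Finset.sum_attach (Finset.range m) (fun i => a (m + lam - i) * Ucoef c a lam k i)]

lemma Ucoef_rec {K : Type*} [Field K] {a : ℕ → K} {lam : ℕ} (ha : a lam ≠ 0) {k m : ℕ}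
    (h : k < m) :
    a lam * Ucoef (a lam)⁻¹ a lam k m
      + ((if k = 0 then 0 else Ucoef (a lam)⁻¹ a lam (k - 1) (m + lam))
      + ∑ i ∈ Finset.range m, a (m + lam - i) * Ucoef (a lam)⁻¹ a lam k i) = 0 := by
  rw [Ucoef_of_lt h, neg_mul, mul_neg, ← mul_assoc, mul_inv_cancel₀ ha, one_mul, neg_add_cancel]

lemma coeff_mulG {K : Type*} [Field K] {lam : ℕ} {G : MvPowerSeries (Fin 2) K}
    (hGY : ∀ m : Fin 2 →₀ ℕ, MvPowerSeries.coeff m G ≠ 0 → m 0 = 0 ∧ lam ≤ m 1)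
    (u' : MvPowerSeries (Fin 2) K) (m : Fin 2 →₀ ℕ) :
    MvPowerSeries.coeff m (u' * G) = ∑ j ∈ Finset.range (m 1 + 1),
      MvPowerSeries.coeff (m - Finsupp.single 1 j) u' *
        MvPowerSeries.coeff (Finsupp.single 1 j) G := by
  classical
  rw [MvPowerSeries.coeff_mul]
  have hfil : ∀ p ∈ Finset.HasAntidiagonal.antidiagonal m,
      MvPowerSeries.coeff p.1 u' * MvPowerSeries.coeff p.2 G ≠ 0 →
      p.2 = Finsupp.single 1 (p.2 1) := by
    intro p _ hp
    have h2 := hGY p.2 (right_ne_zero_of_mul hp)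
    ext x
    fin_cases x
    · simpa [Finsupp.single_apply] using h2.1
    · simp [Finsupp.single_apply]
  rw [← Finset.sum_filter_of_ne hfil]
  refine Finset.sum_bij' (fun p _ => p.2 1)
    (fun j _ => (m - Finsupp.single 1 j, Finsupp.single 1 j)) ?_ ?_ ?_ ?_ ?_
  · intro p hp
    obtain ⟨hp1, _⟩ := Finset.mem_filter.mp hp
    have hm := Finset.HasAntidiagonal.mem_antidiagonal.mp hp1
    have h1 : p.1 1 + p.2 1 = m 1 := by rw [← Finsupp.add_apply, hm]
    simp only [Finset.mem_range]; omega
  · intro j hj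
    have hle : Finsupp.single (1 : Fin 2) j ≤ m :=
      Finsupp.single_le_iff.mpr (by simpa using Nat.lt_succ_iff.mp (Finset.mem_range.mp hj))
    refine Finset.mem_filter.mpr ⟨Finset.HasAntidiagonal.mem_antidiagonal.mpr (tsub_add_cancel_of_le hle), ?_⟩
    simp
  · intro p hp
    obtain ⟨hp1, hp2⟩ := Finset.mem_filter.mp hp
    have hm := Finset.HasAntidiagonal.mem_antidiagonal.mp hp1
    have h1 : p.1 = m - p.2 := eq_tsub_of_add_eq hm
    rw [Prod.ext_iff]
    exact ⟨by rw [← hp2]; exact h1.symm, hp2.symm⟩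
  · intro j _
    simp
  · intro p hp
    obtain ⟨hp1, hp2⟩ := Finset.mem_filter.mp hp
    have hm := Finset.HasAntidiagonal.mem_antidiagonal.mp hp1
    have h1 : p.1 = m - p.2 := eq_tsub_of_add_eq hm
    rw [← hp2, ← h1]

/-- `substXY H` is the series `H(X, XY)`, the result of the quadratic substitution
`X ↦ X₁`, `Y ↦ X₁Y₁`: its coefficient at `X^i Y^j` is the coefficient of `H` at
`X^{i-j} Y^j` (and `0` if `j > i`). -/
noncomputable def substXY {K : Type*} [Field K] (H : MvPowerSeries (Fin 2) K) :
    MvPowerSeries (Fin 2) K :=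
  fun m => if m 1 ≤ m 0 then MvPowerSeries.coeff (mon2 (m 0 - m 1) (m 1)) H else 0

/-- Let `G(Y) = ∑_{i ≥ λ} α_i Y^i ∈ K[[Y]]` with `λ > 1` and `α_λ ≠ 0`.  Then there exist
a power series `H(X,Y) ∈ K[[X,Y]]` of order `λ`, regular in `Y` of order `λ`
(`ord H(0,Y) = λ`), and a unit `u ∈ K[[X,Y]]` such that
`H(X₁, X₁Y₁) = X₁^λ · u(X₁,Y₁) · (X₁ + G(Y₁))`. -/
theorem exists_curve_descending_to_tangent {K : Type*} [Field K] (lam : ℕ) (hlam : 1 < lam)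
    (G : MvPowerSeries (Fin 2) K)
    (hGY : ∀ m : Fin 2 →₀ ℕ, MvPowerSeries.coeff m G ≠ 0 → m 0 = 0 ∧ lam ≤ m 1)
    (hGlam : MvPowerSeries.coeff (mon2 0 lam) G ≠ 0) :
    ∃ H u : MvPowerSeries (Fin 2) K,
      (∀ m : Fin 2 →₀ ℕ, MvPowerSeries.coeff m H ≠ 0 → lam ≤ m 0 + m 1) ∧
      (∃ m : Fin 2 →₀ ℕ, m 0 + m 1 = lam ∧ MvPowerSeries.coeff m H ≠ 0) ∧
      (∀ j, j < lam → MvPowerSeries.coeff (mon2 0 j) H = 0) ∧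
      MvPowerSeries.coeff (mon2 0 lam) H ≠ 0 ∧
      IsUnit u ∧
      substXY H = (MvPowerSeries.X 0 : MvPowerSeries (Fin 2) K) ^ lam * u *
        (MvPowerSeries.X 0 + G) := by
  classical
  open MvPowerSeries Finset in
  -- basic evaluations
  have hm0 : ∀ i j : ℕ, mon2 i j 0 = i := by
    intro i j; simp [mon2, Finsupp.single_apply]
  have hm1 : ∀ i j : ℕ, mon2 i j 1 = j := by
    intro i j; simp [mon2, Finsupp.single_apply]
  have hmon : ∀ j : ℕ, mon2 0 j = Finsupp.single 1 j := by
    intro j; simp [mon2]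
  set a : ℕ → K := fun j => MvPowerSeries.coeff (Finsupp.single 1 j) G with ha_def
  have halam : a lam ≠ 0 := by rw [ha_def]; simpa [hmon] using hGlam
  have hazero : ∀ j, j < lam → a j = 0 := by
    intro j hj
    by_contra hne
    have := (hGY _ hne).2
    rw [Finsupp.single_eq_same] at this
    omega
  set c : K := (a lam)⁻¹ with hc_def
  set u : MvPowerSeries (Fin 2) K := fun m => Ucoef c a lam (m 0) (m 1) with hu_def
  have hu : ∀ m : Fin 2 →₀ ℕ, MvPowerSeries.coeff m u = Ucoef c a lam (m 0) (m 1) :=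
    fun m => rfl
  set A : MvPowerSeries (Fin 2) K := u * (MvPowerSeries.X 0 + G) with hA_def
  -- coefficient formula for A
  have coeffA : ∀ m : Fin 2 →₀ ℕ, MvPowerSeries.coeff m A =
      (if m 0 = 0 then 0 else Ucoef c a lam (m 0 - 1) (m 1))
      + ∑ j ∈ Finset.range (m 1 + 1), Ucoef c a lam (m 0) (m 1 - j) * a j := by
    intro m
    rw [hA_def, mul_add, map_add]
    congr 1
    · rw [show (MvPowerSeries.X 0 : MvPowerSeries (Fin 2) K)
        = MvPowerSeries.monomial (Finsupp.single 0 1) 1 from rfl,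
        MvPowerSeries.coeff_mul_monomial]
      by_cases h0 : m 0 = 0
      · rw [if_neg, if_pos h0]
        rw [Finsupp.single_le_iff, h0]
        omega
      · rw [if_pos (Finsupp.single_le_iff.mpr (Nat.one_le_iff_ne_zero.mpr h0)), if_neg h0,
          mul_one, hu]
        congr 1 <;> simp [Finsupp.tsub_apply, Finsupp.single_apply]
    · rw [coeff_mulG hGY u m]
      refine Finset.sum_congr rfl fun j _ => ?_
      rw [hu]
      congr 2 <;> simp [Finsupp.tsub_apply, Finsupp.single_apply]
  -- key vanishing
  have hvan : ∀ m : Fin 2 →₀ ℕ, m 0 + lam < m 1 → MvPowerSeries.coeff m A = 0 := by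
    intro m hm
    rw [coeffA m]
    revert hm
    generalize m 0 = k
    generalize m 1 = b
    intro hm
    obtain ⟨m', rfl⟩ : ∃ m', b = m' + lam := ⟨b - lam, by omega⟩
    have hkm' : k < m' := by omega
    have hs1 : ∑ j ∈ Finset.range (m' + lam + 1), Ucoef c a lam k (m' + lam - j) * a j
        = ∑ i ∈ Finset.range (m' + lam + 1), Ucoef c a lam k i * a (m' + lam - i) := by
      rw [← Finset.sum_range_reflect (fun i => Ucoef c a lam k i * a (m' + lam - i))
        (m' + lam + 1)]
      refine Finset.sum_congr rfl fun j hj => ?_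
      have hjb : j ≤ m' + lam := by simpa [Nat.lt_succ_iff] using hj
      have e1 : m' + lam + 1 - 1 - j = m' + lam - j := by omega
      have e2 : m' + lam - (m' + lam - j) = j := by omega
      rw [e1, e2]
    have hs2 : ∑ i ∈ Finset.range (m' + lam + 1), Ucoef c a lam k i * a (m' + lam - i)
        = ∑ i ∈ Finset.range (m' + 1), Ucoef c a lam k i * a (m' + lam - i) := by
      symm
      apply Finset.sum_subset (Finset.range_subset_range.mpr (by omega))
      intro i hib hnm
      rw [Finset.mem_range] at hib hnm
      rw [hazero (m' + lam - i) (by omega), mul_zero]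
    have hs3 : ∑ i ∈ Finset.range m', Ucoef c a lam k i * a (m' + lam - i)
        = ∑ i ∈ Finset.range m', a (m' + lam - i) * Ucoef c a lam k i :=
      Finset.sum_congr rfl fun i _ => mul_comm _ _
    rw [hs1, hs2, Finset.sum_range_succ, hs3]
    have e4 : m' + lam - m' = lam := by omega
    rw [e4, hc_def]
    linear_combination Ucoef_rec halam hkm'
  -- the distinguished coefficient
  have hAlam : MvPowerSeries.coeff (Finsupp.single 1 lam) A = a lam := by
    rw [coeffA]
    have e0 : (Finsupp.single (1 : Fin 2) lam) 0 = 0 := by simp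
    have e1 : (Finsupp.single (1 : Fin 2) lam) 1 = lam := Finsupp.single_eq_same
    rw [e0, e1, if_pos rfl, zero_add]
    rw [Finset.sum_eq_single lam]
    · rw [Nat.sub_self, Ucoef_of_le (le_refl 0), if_pos rfl, one_mul]
    · intro j hj hne
      rw [Finset.mem_range] at hj
      rw [hazero j (by omega), mul_zero]
    · intro h
      exact absurd (Finset.self_mem_range_succ lam) h
  set RHS : MvPowerSeries (Fin 2) K := (MvPowerSeries.X 0 : MvPowerSeries (Fin 2) K) ^ lam * A
    with hRHS_def
  have coeffRHS : ∀ m : Fin 2 →₀ ℕ, MvPowerSeries.coeff m RHS =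
      if lam ≤ m 0 then MvPowerSeries.coeff (m - Finsupp.single 0 lam) A else 0 := by
    intro m
    rw [hRHS_def, MvPowerSeries.X_pow_eq, MvPowerSeries.coeff_monomial_mul]
    by_cases h : lam ≤ m 0
    · rw [if_pos (Finsupp.single_le_iff.mpr h), if_pos h, one_mul]
    · rw [if_neg, if_neg h]
      rw [Finsupp.single_le_iff]
      exact h
  set H : MvPowerSeries (Fin 2) K :=
    fun m => MvPowerSeries.coeff (mon2 (m 0 + m 1) (m 1)) RHS with hH_def
  have hH : ∀ m : Fin 2 →₀ ℕ, MvPowerSeries.coeff m H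
      = MvPowerSeries.coeff (mon2 (m 0 + m 1) (m 1)) RHS := fun m => rfl
  have hdiag : ∀ n : ℕ, mon2 n n - Finsupp.single 0 lam = mon2 (n - lam) n := by
    intro n
    ext x
    fin_cases x <;> simp [mon2, Finsupp.tsub_apply, Finsupp.single_apply]
  have hHlam : MvPowerSeries.coeff (mon2 0 lam) H ≠ 0 := by
    rw [hH, hm0, hm1, zero_add, coeffRHS, if_pos (by rw [hm0])]
    rw [hdiag lam, Nat.sub_self, hmon lam, hAlam]
    exact halam
  refine ⟨H, u, ?_, ⟨mon2 0 lam, by rw [hm0, hm1, zero_add], hHlam⟩, ?_, hHlam, ?_, ?_⟩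
  · -- order ≥ lam
    intro m hne
    by_contra hlt
    push_neg at hlt
    apply hne
    rw [hH, coeffRHS, if_neg]
    rw [hm0]
    omega
  · -- coeff at (0, j) for j < lam
    intro j hj
    rw [hH, hm0, hm1, zero_add, coeffRHS, if_neg]
    rw [hm0]
    omega
  · -- u is a unit
    rw [MvPowerSeries.isUnit_iff_constantCoeff]
    have : MvPowerSeries.constantCoeff u = 1 := by
      rw [← MvPowerSeries.coeff_zero_eq_constantCoeff, hu]
      simp [Ucoef_of_le (le_refl 0)]
    rw [this]
    exact isUnit_one
  · -- the substitution identity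
    rw [mul_assoc, ← hA_def, ← hRHS_def]
    apply MvPowerSeries.ext
    intro m
    rw [show MvPowerSeries.coeff m (substXY H) = substXY H m from rfl]
    unfold substXY
    by_cases h : m 1 ≤ m 0
    · rw [if_pos h, hH, hm0, hm1, Nat.sub_add_cancel h]
      have hmm : mon2 (m 0) (m 1) = m := by
        ext x
        fin_cases x <;> simp [mon2, Finsupp.single_apply]
      rw [hmm]
    · rw [if_neg h, coeffRHS]
      by_cases h2 : lam ≤ m 0
      · rw [if_pos h2]
        have e0 : ((m - Finsupp.single 0 lam : Fin 2 →₀ ℕ)) 0 = m 0 - lam := by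
          simp [Finsupp.tsub_apply]
        have e1 : ((m - Finsupp.single 0 lam : Fin 2 →₀ ℕ)) 1 = m 1 := by
          simp [Finsupp.tsub_apply, Finsupp.single_apply]
        exact (hvan _ (by rw [e0, e1]; omega)).symm
      · rw [if_neg h2]
end
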